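/- arXiv:1708.03728 — 2 statements merged into one kernel-verified Lean document; each statement's English description precedes it below -/
import Mathlib

section
/- Let N ≥ 1 be an integer. There exists a constant C > 0, depending only on N, such that for every function u : ℝ^N → ℂ of Σ-class one has (∫_{ℝ^N} |u(x)|^{2−1/N} dx)^{1/(2−1/N)} ≤ C ‖u‖_Σ. In particular the inclusion Σ ↪ L^{2−1/N}(ℝ^N) is continuous. -/
open MeasureTheory Real Filter Topology
open scoped InnerProductSpace BigOperators

noncomputable section

/-- Euclidean space ℝ^N. -/
abbrev Sp (N : ℕ) := EuclideanSpace ℝ (Fin N)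

variable {N : ℕ}

/-- The j-th partial derivative of a complex-valued function on ℝ^N. -/
def pd (u : Sp N → ℂ) (j : Fin N) (x : Sp N) : ℂ :=
  fderiv ℝ u x (EuclideanSpace.single j 1)

/-- |∇u(x)|², the squared euclidean length of the gradient. -/
def gradSq (u : Sp N → ℂ) (x : Sp N) : ℝ :=
  ∑ j, ‖pd u j x‖ ^ 2

/-- The j-th partial derivative of a real-valued function on ℝ^N. -/
def pdR (u : Sp N → ℝ) (j : Fin N) (x : Sp N) : ℝ :=
  fderiv ℝ u x (EuclideanSpace.single j 1)

/-- |∇u(x)|² for a real-valued function. -/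
def gradSqR (u : Sp N → ℝ) (x : Sp N) : ℝ :=
  ∑ j, pdR u j x ^ 2

/-- The Laplacian of a real-valued function. -/
def lapR (u : Sp N → ℝ) (x : Sp N) : ℝ :=
  ∑ j, fderiv ℝ (fun y => pdR u j y) x (EuclideanSpace.single j 1)

/-- The Laplacian of a complex-valued function. -/
def lap (u : Sp N → ℂ) (x : Sp N) : ℂ :=
  ∑ j, fderiv ℝ (fun y => pd u j y) x (EuclideanSpace.single j 1)

/-- Σ-class: C¹ with u, ∇u and |x|u square integrable. -/
def IsSigma (u : Sp N → ℂ) : Prop :=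
  ContDiff ℝ 1 u ∧ Integrable (fun x => ‖u x‖ ^ 2) ∧
    Integrable (fun x => gradSq u x) ∧
    Integrable (fun x => ‖x‖ ^ 2 * ‖u x‖ ^ 2)

/-- Σ-class for real-valued functions. -/
def IsSigmaR (u : Sp N → ℝ) : Prop :=
  ContDiff ℝ 1 u ∧ Integrable (fun x => u x ^ 2) ∧
    Integrable (fun x => gradSqR u x) ∧
    Integrable (fun x => ‖x‖ ^ 2 * u x ^ 2)

/-- The squared Σ-norm. -/
def sigmaNormSq (u : Sp N → ℂ) : ℝ :=
  ∫ x, (gradSq u x + ‖x‖ ^ 2 * ‖u x‖ ^ 2 + ‖u x‖ ^ 2)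

/-- The integrand |u|² log |u|² (with the convention 0 log 0 = 0, as Real.log 0 = 0). -/
def logTerm (u : Sp N → ℂ) (x : Sp N) : ℝ :=
  ‖u x‖ ^ 2 * Real.log (‖u x‖ ^ 2)

/-- W-class: C¹ with u, ∇u square integrable and |u|² log|u|² integrable. -/
def IsW (u : Sp N → ℂ) : Prop :=
  ContDiff ℝ 1 u ∧ Integrable (fun x => ‖u x‖ ^ 2) ∧
    Integrable (fun x => gradSq u x) ∧ Integrable (logTerm u)

/-- The Gausson R(x) = e^{(1+N)/2} e^{-|x|²}. -/
def gausson (N : ℕ) (x : Sp N) : ℝ :=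
  Real.exp ((1 + N) / 2) * Real.exp (-‖x‖ ^ 2)

/-- The mass of the Gausson, m = ∫ R². -/
def massR (N : ℕ) : ℝ := ∫ x, gausson N x ^ 2

/-- The energy 𝓔(u) = ½∫|∇u|² - ∫|u|² log|u|². -/
def energy (u : Sp N → ℂ) : ℝ :=
  (1 / 2) * (∫ x, gradSq u x) - ∫ x, logTerm u x

/-- The energy of the Gausson, 𝓔(R). -/
def energyR (N : ℕ) : ℝ :=
  (1 / 2) * (∫ x, gradSqR (gausson N) x)
    - ∫ x, gausson N x ^ 2 * Real.log (gausson N x ^ 2)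

/-- The squared H¹ norm. -/
def h1NormSq (u : Sp N → ℂ) : ℝ :=
  (∫ x, gradSq u x) + ∫ x, ‖u x‖ ^ 2

/-- The squared H¹ distance ‖φ - e^{iθ}R(·-y)‖²_{H¹}. -/
def h1DistToGausson (N : ℕ) (φ : Sp N → ℂ) (y : Sp N) (θ : ℝ) : ℝ :=
  (∫ x, ∑ j, ‖pd φ j x - Complex.exp (Complex.I * (θ : ℂ)) * (pdR (gausson N) j (x - y) : ℝ)‖ ^ 2)
    + ∫ x, ‖φ x - Complex.exp (Complex.I * (θ : ℂ)) * (gausson N (x - y) : ℝ)‖ ^ 2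

/-- The Gausson-type initial datum u_{ε,0}(x) = e^{i x·v₀/ε} R((x-x₀)/ε). -/
def gaussonInit (N : ℕ) (x₀ v₀ : Sp N) (ε : ℝ) (x : Sp N) : ℂ :=
  Complex.exp (Complex.I * ((⟪x, v₀⟫_ℝ / ε : ℝ) : ℂ)) * (gausson N (ε⁻¹ • (x - x₀)) : ℝ)

/-- The scaled energy E_ε(u); note 1/(2ε^{N-2}) = ε²/(2ε^N). -/
def Eeps (N : ℕ) (V : Sp N → ℝ) (ε : ℝ) (u : Sp N → ℂ) : ℝ :=
  (ε ^ 2 / (2 * ε ^ N)) * (∫ x, gradSq u x)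
    + (ε ^ N)⁻¹ * (∫ x, V x * ‖u x‖ ^ 2)
    - (ε ^ N)⁻¹ * ∫ x, logTerm u x

/-- V is Cᵏ and bounded together with its derivatives up to order k. -/
def BddDerivs (N : ℕ) (V : Sp N → ℝ) (k : ℕ) : Prop :=
  ContDiff ℝ (k : ℕ∞) V ∧ ∀ i : ℕ, i ≤ k → ∃ B : ℝ, ∀ x, ‖iteratedFDeriv ℝ i V x‖ ≤ B

/-- The action S(u) = ¼∫|∇u|² + ∫|u|² - ½∫|u|² log|u|². -/
def actionS (u : Sp N → ℂ) : ℝ :=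
  (1 / 4) * (∫ x, gradSq u x) + (∫ x, ‖u x‖ ^ 2) - (1 / 2) * ∫ x, logTerm u x

/-- The quadratic form Q(z) = ½∫|∇z|² + 2∫|x|²|z|² - N∫|z|² - 2∫(Re z)². -/
def quadQ (N : ℕ) (z : Sp N → ℂ) : ℝ :=
  (1 / 2) * (∫ x, gradSq z x) + 2 * (∫ x, ‖x‖ ^ 2 * ‖z x‖ ^ 2)
    - N * (∫ x, ‖z x‖ ^ 2) - 2 * ∫ x, (z x).re ^ 2

/-- The squared scaled H¹_ε norm: ε^{2-N}∫|∇φ|² + ε^{-N}∫|φ|². -/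
def h1EpsNormSq (N : ℕ) (ε : ℝ) (u : Sp N → ℂ) : ℝ :=
  ε ^ (2 - (N : ℝ)) * (∫ x, gradSq u x) + (ε ^ N)⁻¹ * ∫ x, ‖u x‖ ^ 2

/-- Second-order Taylor expansion of the action S at the Gausson R, with second
variation given by the quadratic form Q. -/
def TaylorS (N : ℕ) : Prop :=
  ∀ η > (0 : ℝ), ∃ ρ > (0 : ℝ), ∀ w : Sp N → ℂ, IsSigma w → Integrable (logTerm w) →
    Real.sqrt (h1NormSq (fun x => w x - (gausson N x : ℂ))) < ρ →
    |actionS w - actionS (fun x => (gausson N x : ℂ))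
        - (1 / 2) * quadQ N (fun x => w x - (gausson N x : ℂ))|
      ≤ η * h1NormSq (fun x => w x - (gausson N x : ℂ))


/-! Write `u = (1 + |x|)⁻¹ • ((1 + |x|) • u)`. The weight `(1 + |x|)⁻¹` lies in `L^r(ℝ^N)` for
every `r > N`, in particular for `r = 4N - 2`, and `‖(1 + |x|) u‖_{L²} ≤ √2 ‖u‖_Σ`. Since
`1 / (2 - 1/N) = 1 / (4N - 2) + 1 / 2`, Hölder's inequality bounds `‖u‖_{L^{2 - 1/N}}` by the
product of these two norms. -/

theorem holderTriple_ofReal_four_mul_sub_two {n : ℝ} (hn : 1 ≤ n) :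
    ENNReal.HolderTriple (ENNReal.ofReal (4 * n - 2)) 2 (ENNReal.ofReal (2 - 1 / n)) := by
  have h := (Real.HolderTriple.of_pos (p := 4 * n - 2) (q := 2) (by linarith) two_pos)
  have hr : ((4 * n - 2)⁻¹ + 2⁻¹)⁻¹ = 2 - 1 / n := by
    refine inv_eq_of_mul_eq_one_right ?_
    have h4 : 4 * n - 2 ≠ 0 := by linarith
    field_simp
    ring
  simpa [hr] using h.ennrealOfReal

theorem norm_one_add_norm_smul_sq_le {E F : Type*} [NormedAddCommGroup E] [NormedAddCommGroup F]
    [NormedSpace ℝ F] (x : E) (v : F) :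
    ‖(1 + ‖x‖) • v‖ ^ 2 ≤ 2 * (‖x‖ ^ 2 * ‖v‖ ^ 2 + ‖v‖ ^ 2) := by
  rw [norm_smul, Real.norm_of_nonneg (by positivity), mul_pow]
  nlinarith [sq_nonneg (1 - ‖x‖), sq_nonneg ‖v‖, mul_nonneg (sq_nonneg (1 - ‖x‖)) (sq_nonneg ‖v‖)]

theorem eLpNorm_two_le_sqrt_integral {α F : Type*} [MeasurableSpace α] [NormedAddCommGroup F]
    {μ : Measure α} {g : α → F} {h : α → ℝ} (hh : Integrable h μ)
    (hgh : ∀ᵐ x ∂μ, ‖g x‖ ^ 2 ≤ h x) :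
    eLpNorm g 2 μ ≤ ENNReal.ofReal (√(∫ x, h x ∂μ)) := by
  have hh0 : 0 ≤ᵐ[μ] h := hgh.mono fun x hx => (sq_nonneg _).trans hx
  have hlint : ∫⁻ x, ‖g x‖ₑ ^ (2 : ℝ) ∂μ ≤ ENNReal.ofReal (∫ x, h x ∂μ) := by
    rw [ofReal_integral_eq_lintegral_ofReal hh hh0]
    refine lintegral_mono_ae (hgh.mono fun x hx => ?_)
    rw [← ofReal_norm, ENNReal.ofReal_rpow_of_nonneg (norm_nonneg _) zero_le_two,
      Real.rpow_two]
    exact ENNReal.ofReal_le_ofReal hx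
  rw [eLpNorm_eq_lintegral_rpow_enorm_toReal two_ne_zero ENNReal.ofNat_ne_top,
    ENNReal.toReal_ofNat, Real.sqrt_eq_rpow,
    ← ENNReal.ofReal_rpow_of_nonneg (integral_nonneg_of_ae hh0) (by norm_num)]
  gcongr

section Weight

variable {E : Type*} [NormedAddCommGroup E] [MeasurableSpace E] [BorelSpace E]

theorem memLp_one_add_norm_inv [NormedSpace ℝ E] [FiniteDimensional ℝ E] (μ : Measure E)
    [μ.IsAddHaarMeasure] {r : ℝ} (hr : (Module.finrank ℝ E : ℝ) < r) :
    MemLp (fun x : E => (1 + ‖x‖)⁻¹) (ENNReal.ofReal r) μ := by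
  have hr0 : 0 < r := (Nat.cast_nonneg _).trans_lt hr
  have hmeas : AEStronglyMeasurable (fun x : E => (1 + ‖x‖)⁻¹) μ :=
    (by fun_prop : Measurable fun x : E => (1 + ‖x‖)⁻¹).aestronglyMeasurable
  refine (integrable_norm_rpow_iff hmeas (by simpa using hr0) ENNReal.ofReal_ne_top).1 ?_
  refine (integrable_one_add_norm hr).congr (Eventually.of_forall fun x => ?_)
  have hx : 0 < 1 + ‖x‖ := by positivity
  simp only [ENNReal.toReal_ofReal hr0.le, norm_inv, Real.norm_of_nonneg hx.le,
    Real.inv_rpow hx.le, Real.rpow_neg hx.le]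

theorem eLpNorm_le_eLpNorm_one_add_norm_inv_mul {F : Type*} [NormedAddCommGroup F]
    [NormedSpace ℝ F] {μ : Measure E} {p q r : ENNReal} [ENNReal.HolderTriple p q r]
    {u : E → F} (hu : AEStronglyMeasurable u μ) :
    eLpNorm u r μ ≤
      eLpNorm (fun x => (1 + ‖x‖)⁻¹) p μ * eLpNorm (fun x => (1 + ‖x‖) • u x) q μ := by
  have hfactor : (fun x : E => (1 + ‖x‖)⁻¹) • (fun x => (1 + ‖x‖) • u x) = u := by
    ext x
    have hx : (1 + ‖x‖) ≠ 0 := by positivity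
    simp [smul_smul, inv_mul_cancel₀ hx]
  conv_lhs => rw [← hfactor]
  refine eLpNorm_smul_le_mul_eLpNorm ?_ ?_
  · exact (continuous_const.add continuous_norm).aestronglyMeasurable.smul hu
  · exact (by fun_prop : Measurable fun x : E => (1 + ‖x‖)⁻¹).aestronglyMeasurable

end Weight

theorem eLpNorm_one_add_norm_smul_le_sqrt_two_mul {u : Sp N → ℂ} (hu : IsSigma u) :
    eLpNorm (fun x => (1 + ‖x‖) • u x) 2 volume ≤ ENNReal.ofReal (√2 * √(sigmaNormSq u)) := by
  obtain ⟨-, hu2, hgrad, hxu⟩ := hu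
  have hweighted : ∫ x, (‖x‖ ^ 2 * ‖u x‖ ^ 2 + ‖u x‖ ^ 2) ≤ sigmaNormSq u := by
    refine integral_mono (hxu.add hu2) ((hgrad.add hxu).add hu2) fun x => ?_
    have : 0 ≤ gradSq u x := Finset.sum_nonneg fun j _ => sq_nonneg _
    dsimp only
    linarith
  calc eLpNorm (fun x => (1 + ‖x‖) • u x) 2 volume
      ≤ ENNReal.ofReal (√(∫ x, 2 * (‖x‖ ^ 2 * ‖u x‖ ^ 2 + ‖u x‖ ^ 2))) :=
        eLpNorm_two_le_sqrt_integral ((hxu.add hu2).const_mul 2)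
          (.of_forall fun x => norm_one_add_norm_smul_sq_le x (u x))
    _ ≤ ENNReal.ofReal (√2 * √(sigmaNormSq u)) := by
        rw [integral_const_mul, Real.sqrt_mul zero_le_two]
        gcongr

/-- continuity of the embedding Σ(ℝ^N) ↪ L^{2-1/N}(ℝ^N). -/
theorem stmt0 (N : ℕ) (hN : 1 ≤ N) :
    ∃ C : ℝ, 0 < C ∧ ∀ u : Sp N → ℂ, IsSigma u →
      eLpNorm u (ENNReal.ofReal (2 - 1 / N)) volume ≤
        ENNReal.ofReal (C * Real.sqrt (sigmaNormSq u)) := by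
  have hN' : (1 : ℝ) ≤ N := by exact_mod_cast hN
  have := holderTriple_ofReal_four_mul_sub_two hN'
  have hweight := memLp_one_add_norm_inv (volume : Measure (Sp N)) (r := 4 * N - 2)
    (by rw [finrank_euclideanSpace_fin]; linarith)
  set K := (eLpNorm (fun x : Sp N => (1 + ‖x‖)⁻¹) (ENNReal.ofReal (4 * N - 2)) volume).toReal
  refine ⟨K * √2 + 1, by positivity, fun u hu => ?_⟩
  calc eLpNorm u (ENNReal.ofReal (2 - 1 / N)) volume
      ≤ eLpNorm (fun x : Sp N => (1 + ‖x‖)⁻¹) (ENNReal.ofReal (4 * N - 2)) volume *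
          eLpNorm (fun x => (1 + ‖x‖) • u x) 2 volume :=
        eLpNorm_le_eLpNorm_one_add_norm_inv_mul hu.1.continuous.aestronglyMeasurable
    _ ≤ ENNReal.ofReal K * ENNReal.ofReal (√2 * √(sigmaNormSq u)) := by
        rw [ENNReal.ofReal_toReal hweight.eLpNorm_ne_top]
        gcongr
        exact eLpNorm_one_add_norm_smul_le_sqrt_two_mul hu
    _ ≤ ENNReal.ofReal ((K * √2 + 1) * √(sigmaNormSq u)) := by
        rw [← ENNReal.ofReal_mul ENNReal.toReal_nonneg, ← mul_assoc]
        gcongr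
        linarith
end
end

section
/- Let N ≥ 1 and let V : ℝ^N → ℝ be of class C³ and bounded together with its derivatives up to order 3. Fix x₀, v₀ ∈ ℝ^N and for ε > 0 set u_{ε,0}(x) = e^{i x·v₀/ε} R((x−x₀)/ε), where R is the Gausson. Define m = ∫_{ℝ^N} R² dx, 𝓔(R) = ½∫|∇R|² dx − ∫R² log R² dx, and E_ε(u) = (1/(2ε^{N−2}))∫|∇u|² dx + ε^{−N}∫V|u|² dx − ε^{−N}∫|u|² log|u|² dx. Then there is a constant C > 0, independent of ε, such that for all ε ∈ (0,1]: |E_ε(u_{ε,0}) − 𝓔(R) − m(½|v₀|² + V(x₀))| ≤ C ε². -/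
open MeasureTheory Real Filter Topology
open scoped InnerProductSpace BigOperators

noncomputable section

variable {N : ℕ}

/-! Rescaling `x = x₀ + ε y` turns `E_ε(u_{ε,0})` into `𝓔(R) + m |v₀|² / 2 + ∫ V(x₀ + ε y) R(y)² dy`:
the modulus of `u_{ε,0}` is a rescaled Gausson, and the phase only adds `m |v₀|² / 2` to the
kinetic energy. As `R` is even, subtracting `m V(x₀)` leaves
`½ ∫ (V(x₀ + ε y) + V(x₀ - ε y) - 2 V(x₀)) R(y)² dy`, and this second difference is `O(ε² |y|²)`
because `D²V` is bounded, while `|y|² R²` is integrable. -/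

open Complex in
theorem norm_fderiv_exp_I_mul_ofReal_mul_sq {E : Type*} [NormedAddCommGroup E] [NormedSpace ℝ E]
    {θ g : E → ℝ} {x : E} (hθ : DifferentiableAt ℝ θ x) (hg : DifferentiableAt ℝ g x) (v : E) :
    ‖fderiv ℝ (fun y => exp (I * θ y) * g y) x v‖ ^ 2 =
      fderiv ℝ g x v ^ 2 + (g x * fderiv ℝ θ x v) ^ 2 := by
  have hphase := ((ofRealCLM.hasFDerivAt.comp x hθ.hasFDerivAt).const_mul I).cexp
  have hmod := ofRealCLM.hasFDerivAt.comp x hg.hasFDerivAt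
  have hprod : fderiv ℝ (fun y => exp (I * θ y) * g y) x v =
      exp (I * θ x) * (fderiv ℝ g x v + (g x * fderiv ℝ θ x v : ℝ) * I) := by
    have hu : HasFDerivAt (fun y => exp (I * θ y) * g y) _ x := hphase.mul hmod
    rw [hu.fderiv]
    simp only [Function.comp_def, add_apply, smul_apply, ContinuousLinearMap.comp_apply,
      ofRealCLM_apply, smul_eq_mul]
    push_cast
    ring
  rw [hprod, norm_mul, norm_exp_I_mul_ofReal, one_mul, Complex.sq_norm, normSq_add_mul_I]

section SecondDifference

variable {E F : Type*} [NormedAddCommGroup E] [NormedSpace ℝ E] [NormedAddCommGroup F]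
  [NormedSpace ℝ F]

theorem norm_sub_sub_fderiv_le_of_norm_iteratedFDeriv_two_le {f : E → F} (hf : ContDiff ℝ 2 f)
    {B : ℝ} (hB : ∀ z, ‖iteratedFDeriv ℝ 2 f z‖ ≤ B) (x h : E) :
    ‖f (x + h) - f x - fderiv ℝ f x h‖ ≤ B * ‖h‖ ^ 2 := by
  have hB₀ : 0 ≤ B := (norm_nonneg _).trans (hB x)
  have hf' : Differentiable ℝ (fderiv ℝ f) :=
    (hf.fderiv_right (m := 1) le_rfl).differentiable one_ne_zero
  have hlip (z : E) : ‖fderiv ℝ f z - fderiv ℝ f x‖ ≤ B * ‖z - x‖ :=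
    convex_univ.norm_image_sub_le_of_norm_fderiv_le (fun w _ => hf'.differentiableAt)
      (fun w _ => by rw [← norm_iteratedFDeriv_one, norm_iteratedFDeriv_fderiv]; exact hB w)
      (Set.mem_univ x) (Set.mem_univ z)
  have := (convex_closedBall x ‖h‖).norm_image_sub_le_of_norm_fderiv_le'
    (fun z _ => (hf.differentiable two_ne_zero).differentiableAt)
    (fun z hz => (hlip z).trans (mul_le_mul_of_nonneg_left (mem_closedBall_iff_norm.1 hz) hB₀))
    (x := x) (y := x + h) (Metric.mem_closedBall_self (norm_nonneg h)) (by simp)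
  simpa [sq, mul_assoc] using this

theorem abs_add_add_sub_two_mul_le {f : E → ℝ} (hf : ContDiff ℝ 2 f) {B : ℝ}
    (hB : ∀ z, ‖iteratedFDeriv ℝ 2 f z‖ ≤ B) (x h : E) :
    |f (x + h) + f (x - h) - 2 * f x| ≤ 2 * B * ‖h‖ ^ 2 := by
  have hplus := norm_sub_sub_fderiv_le_of_norm_iteratedFDeriv_two_le hf hB x h
  have hminus := norm_sub_sub_fderiv_le_of_norm_iteratedFDeriv_two_le hf hB x (-h)
  rw [norm_neg, map_neg, ← sub_eq_add_neg] at hminus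
  rw [Real.norm_eq_abs] at hplus hminus
  calc |f (x + h) + f (x - h) - 2 * f x|
      = |(f (x + h) - f x - fderiv ℝ f x h) + (f (x - h) - f x - -fderiv ℝ f x h)| := by ring_nf
    _ ≤ 2 * B * ‖h‖ ^ 2 := (abs_add_le _ _).trans (by linarith)

variable [MeasurableSpace E] [BorelSpace E]

theorem abs_integral_sub_mul_le_of_even {μ : Measure E} [μ.IsNegInvariant] {f w : E → ℝ}
    (hf : ContDiff ℝ 2 f) {B : ℝ} (hB : ∀ z, ‖iteratedFDeriv ℝ 2 f z‖ ≤ B) (x : E) (c : ℝ)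
    (hw_even : ∀ y, w (-y) = w y) (hw_nonneg : ∀ y, 0 ≤ w y)
    (hfw : Integrable (fun y => f (x + c • y) * w y) μ) (hw : Integrable w μ)
    (hw₂ : Integrable (fun y => ‖y‖ ^ 2 * w y) μ) :
    |∫ y, (f (x + c • y) - f x) * w y ∂μ| ≤ B * c ^ 2 * ∫ y, ‖y‖ ^ 2 * w y ∂μ := by
  set g := fun y => (f (x + c • y) - f x) * w y
  have hg : Integrable g μ := (hfw.sub (hw.const_mul (f x))).congr
    (.of_forall fun y => by simp only [g, Pi.sub_apply]; ring)
  -- `y ↦ -y` preserves `μ` and `w`, so only the even part of `g` survives.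
  have hsymm : 2 * ∫ y, g y ∂μ = ∫ y, (f (x + c • y) + f (x - c • y) - 2 * f x) * w y ∂μ := by
    rw [two_mul]
    nth_rw 2 [← integral_neg_eq_self]
    rw [← integral_add hg hg.comp_neg]
    congr 1 with y
    simp only [g, hw_even, smul_neg, ← sub_eq_add_neg]
    ring
  have hbound : |∫ y, (f (x + c • y) + f (x - c • y) - 2 * f x) * w y ∂μ|
      ≤ ∫ y, 2 * B * c ^ 2 * (‖y‖ ^ 2 * w y) ∂μ := by
    refine (abs_integral_le_integral_abs).trans (integral_mono_of_nonneg
      (.of_forall fun _ => abs_nonneg _) (hw₂.const_mul _) (.of_forall fun y => ?_))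
    beta_reduce
    rw [abs_mul, abs_of_nonneg (hw_nonneg y)]
    have := abs_add_add_sub_two_mul_le hf hB x (c • y)
    rw [norm_smul, mul_pow, Real.norm_eq_abs, sq_abs] at this
    calc _ ≤ 2 * B * (c ^ 2 * ‖y‖ ^ 2) * w y := mul_le_mul_of_nonneg_right this (hw_nonneg y)
      _ = _ := by ring
  rw [integral_const_mul, ← hsymm, abs_mul, abs_two] at hbound
  linarith

end SecondDifference

theorem integral_comp_inv_smul_sub {E : Type*} [NormedAddCommGroup E] [NormedSpace ℝ E]
    [MeasurableSpace E] [BorelSpace E] [FiniteDimensional ℝ E] (μ : Measure E)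
    [μ.IsAddHaarMeasure] (F : E → ℝ) (x₀ : E) {ε : ℝ} (hε : 0 ≤ ε) :
    ∫ x, F (ε⁻¹ • (x - x₀)) ∂μ = ε ^ Module.finrank ℝ E * ∫ y, F y ∂μ := by
  rw [integral_sub_right_eq_self (fun z => F (ε⁻¹ • z)) x₀,
    Measure.integral_comp_inv_smul_of_nonneg μ F hε, smul_eq_mul]

theorem integrable_exp_neg_mul_norm_sq {E : Type*} [NormedAddCommGroup E] [InnerProductSpace ℝ E]
    [FiniteDimensional ℝ E] [MeasurableSpace E] [BorelSpace E] {b : ℝ} (hb : 0 < b) :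
    Integrable (fun y : E => rexp (-b * ‖y‖ ^ 2)) := by
  refine (GaussianFourier.integrable_cexp_neg_mul_sq_norm_add (V := E) (b := b)
    (by simpa using hb) 0 0).norm.congr (.of_forall fun y => ?_)
  simp [Complex.norm_exp, ← Complex.ofReal_pow]

section Gausson

variable {N : ℕ}

theorem gausson_neg (x : Sp N) : gausson N (-x) = gausson N x := by
  rw [gausson, norm_neg, gausson]

theorem gausson_sq (x : Sp N) : gausson N x ^ 2 = rexp (1 + N) * rexp (-2 * ‖x‖ ^ 2) := by
  rw [gausson, mul_pow, ← Real.exp_nat_mul, ← Real.exp_nat_mul]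
  ring_nf

theorem continuous_gausson : Continuous (gausson N) := by
  unfold gausson; fun_prop

theorem integrable_gausson_sq : Integrable (fun y : Sp N => gausson N y ^ 2) := by
  simp_rw [gausson_sq]
  exact (integrable_exp_neg_mul_norm_sq two_pos).const_mul _

theorem integrable_norm_sq_mul_gausson_sq :
    Integrable (fun y : Sp N => ‖y‖ ^ 2 * gausson N y ^ 2) := by
  refine ((integrable_exp_neg_mul_norm_sq one_pos).const_mul (rexp (1 + N))).mono
    ((continuous_norm.pow 2).mul (continuous_gausson.pow 2)).aestronglyMeasurable
    (.of_forall fun y => ?_)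
  -- `t ≤ eᵗ` with `t = ‖y‖²` absorbs half of the Gaussian decay.
  have hdecay : ‖y‖ ^ 2 * rexp (-2 * ‖y‖ ^ 2) ≤ rexp (-1 * ‖y‖ ^ 2) := by
    calc ‖y‖ ^ 2 * rexp (-2 * ‖y‖ ^ 2) ≤ rexp (‖y‖ ^ 2) * rexp (-2 * ‖y‖ ^ 2) := by
          gcongr; linarith [Real.add_one_le_exp (‖y‖ ^ 2)]
      _ = rexp (-1 * ‖y‖ ^ 2) := by rw [← Real.exp_add]; ring_nf
  rw [Real.norm_of_nonneg (by positivity), Real.norm_of_nonneg (by positivity), gausson_sq]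
  calc ‖y‖ ^ 2 * (rexp (1 + N) * rexp (-2 * ‖y‖ ^ 2))
      = rexp (1 + N) * (‖y‖ ^ 2 * rexp (-2 * ‖y‖ ^ 2)) := by ring
    _ ≤ rexp (1 + N) * rexp (-1 * ‖y‖ ^ 2) := by gcongr

theorem hasFDerivAt_gausson (y : Sp N) :
    HasFDerivAt (gausson N) ((-(2 * gausson N y)) • innerSL ℝ y) y := by
  have h := (((hasStrictFDerivAt_norm_sq y).hasFDerivAt.fun_neg).exp).const_mul
    (rexp ((1 + N) / 2))
  refine h.congr_fderiv ?_
  ext z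
  simp only [gausson, smul_apply, neg_apply, smul_eq_mul, nsmul_eq_mul, Nat.cast_ofNat]
  ring

theorem differentiable_gausson : Differentiable ℝ (gausson N) :=
  fun y => (hasFDerivAt_gausson y).differentiableAt

theorem gradSqR_gausson (y : Sp N) : gradSqR (gausson N) y = 4 * (‖y‖ ^ 2 * gausson N y ^ 2) := by
  simp only [gradSqR, pdR, (hasFDerivAt_gausson y).fderiv, smul_apply,
    innerSL_apply_apply, EuclideanSpace.inner_single_right, conj_trivial, smul_eq_mul, mul_pow,
    one_mul, ← Finset.mul_sum, EuclideanSpace.real_norm_sq_eq]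
  ring

theorem integrable_gradSqR_gausson : Integrable (gradSqR (gausson N)) :=
  (integrable_norm_sq_mul_gausson_sq.const_mul 4).congr
    (.of_forall fun y => (gradSqR_gausson y).symm)

end Gausson

section GaussonInit

variable {N : ℕ} (x₀ v₀ : Sp N) {ε : ℝ}

theorem norm_gaussonInit_sq (x : Sp N) :
    ‖gaussonInit N x₀ v₀ ε x‖ ^ 2 = gausson N (ε⁻¹ • (x - x₀)) ^ 2 := by
  rw [gaussonInit, norm_mul, Complex.norm_exp_I_mul_ofReal, one_mul, Complex.norm_real,
    Real.norm_eq_abs, sq_abs]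

theorem gradSq_gaussonInit (x : Sp N) :
    gradSq (gaussonInit N x₀ v₀ ε) x =
      ε⁻¹ ^ 2 * (gradSqR (gausson N) (ε⁻¹ • (x - x₀)) +
        gausson N (ε⁻¹ • (x - x₀)) ^ 2 * ‖v₀‖ ^ 2) := by
  have hθ : HasFDerivAt (fun y : Sp N => ⟪y, v₀⟫_ℝ / ε) (ε⁻¹ • innerSL ℝ v₀) x := by
    simp_rw [div_eq_mul_inv, real_inner_comm v₀]
    exact ((innerSL ℝ v₀).hasFDerivAt (x := x) : HasFDerivAt _ _ x).mul_const ε⁻¹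
  have hscale :
      HasFDerivAt (fun y : Sp N => ε⁻¹ • (y - x₀)) (ε⁻¹ • ContinuousLinearMap.id ℝ _) x :=
    ((hasFDerivAt_id x).sub_const x₀).const_smul ε⁻¹
  have hR := (differentiable_gausson (ε⁻¹ • (x - x₀))).hasFDerivAt.comp x hscale
  have hpd (j : Fin N) : ‖pd (gaussonInit N x₀ v₀ ε) j x‖ ^ 2 =
      (ε⁻¹ * pdR (gausson N) j (ε⁻¹ • (x - x₀))) ^ 2 +
        (gausson N (ε⁻¹ • (x - x₀)) * (ε⁻¹ * v₀ j)) ^ 2 := by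
    refine (norm_fderiv_exp_I_mul_ofReal_mul_sq hθ.differentiableAt hR.differentiableAt
      _).trans ?_
    simp [hθ.fderiv, hR.fderiv, pdR, EuclideanSpace.inner_single_right]
  simp only [gradSq, hpd, gradSqR, Finset.sum_add_distrib, mul_pow, ← Finset.mul_sum,
    EuclideanSpace.real_norm_sq_eq]
  ring

theorem integral_gradSq_gaussonInit (hε : 0 ≤ ε) :
    ∫ x, gradSq (gaussonInit N x₀ v₀ ε) x =
      ε ^ N * (ε⁻¹ ^ 2 * ((∫ y, gradSqR (gausson N) y) + massR N * ‖v₀‖ ^ 2)) := by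
  simp_rw [gradSq_gaussonInit]
  rw [integral_comp_inv_smul_sub volume (fun y => ε⁻¹ ^ 2 * (gradSqR (gausson N) y +
    gausson N y ^ 2 * ‖v₀‖ ^ 2)) x₀ hε, finrank_euclideanSpace_fin, integral_const_mul,
    integral_add integrable_gradSqR_gausson (integrable_gausson_sq.mul_const _),
    integral_mul_const, massR]

theorem integral_potential_mul_norm_gaussonInit_sq (V : Sp N → ℝ) (hε : 0 < ε) :
    ∫ x, V x * ‖gaussonInit N x₀ v₀ ε x‖ ^ 2 = ε ^ N * ∫ y, V (x₀ + ε • y) * gausson N y ^ 2 := by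
  have hV (x : Sp N) : V x = V (x₀ + ε • ε⁻¹ • (x - x₀)) := by
    rw [smul_inv_smul₀ hε.ne', add_sub_cancel]
  simp_rw [norm_gaussonInit_sq]
  conv_lhs => enter [2, x]; rw [hV x]
  rw [integral_comp_inv_smul_sub volume (fun y => V (x₀ + ε • y) * gausson N y ^ 2) x₀ hε.le,
    finrank_euclideanSpace_fin]

theorem integral_logTerm_gaussonInit (hε : 0 ≤ ε) :
    ∫ x, logTerm (gaussonInit N x₀ v₀ ε) x =
      ε ^ N * ∫ y, gausson N y ^ 2 * Real.log (gausson N y ^ 2) := by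
  simp_rw [logTerm, norm_gaussonInit_sq]
  rw [integral_comp_inv_smul_sub volume (fun y => gausson N y ^ 2 * Real.log (gausson N y ^ 2))
    x₀ hε, finrank_euclideanSpace_fin]

theorem Eeps_gaussonInit (V : Sp N → ℝ) (hε : 0 < ε) :
    Eeps N V ε (gaussonInit N x₀ v₀ ε) =
      energyR N + massR N * (1 / 2 * ‖v₀‖ ^ 2) + ∫ y, V (x₀ + ε • y) * gausson N y ^ 2 := by
  rw [Eeps, integral_gradSq_gaussonInit x₀ v₀ hε.le,
    integral_potential_mul_norm_gaussonInit_sq x₀ v₀ V hε,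
    integral_logTerm_gaussonInit x₀ v₀ hε.le, energyR]
  field_simp
  ring

end GaussonInit

theorem stmt3_general (N : ℕ) (V : Sp N → ℝ) (hV : BddDerivs N V 3)
    (x₀ v₀ : Sp N) :
    ∃ C : ℝ, 0 < C ∧ ∀ ε : ℝ, 0 < ε → ε ≤ 1 →
      |Eeps N V ε (gaussonInit N x₀ v₀ ε) - energyR N
          - massR N * ((1 / 2) * ‖v₀‖ ^ 2 + V x₀)| ≤ C * ε ^ 2 := by
  obtain ⟨hV_smooth, hV_bdd⟩ := hV
  obtain ⟨B₀, hB₀⟩ := hV_bdd 0 (by norm_num)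
  obtain ⟨B₂, hB₂⟩ := hV_bdd 2 (by norm_num)
  have hB₂_nonneg : 0 ≤ B₂ := (norm_nonneg _).trans (hB₂ 0)
  set K := ∫ y : Sp N, ‖y‖ ^ 2 * gausson N y ^ 2
  have hK : 0 ≤ K := integral_nonneg fun y => by positivity
  refine ⟨B₂ * K + 1, by positivity, fun ε hε _ => ?_⟩
  have hVR : Integrable (fun y : Sp N => V (x₀ + ε • y) * gausson N y ^ 2) :=
    integrable_gausson_sq.bdd_mul (by fun_prop) (.of_forall fun y => by
      simpa using hB₀ (x₀ + ε • y))
  have hdiff :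
      Eeps N V ε (gaussonInit N x₀ v₀ ε) - energyR N - massR N * (1 / 2 * ‖v₀‖ ^ 2 + V x₀) =
        ∫ y, (V (x₀ + ε • y) - V x₀) * gausson N y ^ 2 := by
    simp_rw [Eeps_gaussonInit x₀ v₀ V hε, sub_mul,
      integral_sub hVR (integrable_gausson_sq.const_mul _), integral_const_mul, massR]
    ring
  rw [hdiff]
  calc _ ≤ B₂ * ε ^ 2 * K :=
        abs_integral_sub_mul_le_of_even (hV_smooth.of_le (by norm_num)) hB₂ x₀ ε
          (fun y => by rw [gausson_neg]) (fun y => sq_nonneg _) hVR integrable_gausson_sq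
          integrable_norm_sq_mul_gausson_sq
    _ ≤ (B₂ * K + 1) * ε ^ 2 := by nlinarith [sq_nonneg ε]

/-- expansion of the energy of the Gausson-type initial datum. -/
theorem stmt3 (N : ℕ) (hN : 1 ≤ N) (V : Sp N → ℝ) (hV : BddDerivs N V 3)
    (x₀ v₀ : Sp N) :
    ∃ C : ℝ, 0 < C ∧ ∀ ε : ℝ, 0 < ε → ε ≤ 1 →
      |Eeps N V ε (gaussonInit N x₀ v₀ ε) - energyR N
          - massR N * ((1 / 2) * ‖v₀‖ ^ 2 + V x₀)| ≤ C * ε ^ 2 :=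
  stmt3_general N V hV x₀ v₀
end
end
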